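/- Let T > 0 and L ≥ 0. Assume that for every t ∈ [0,T] the map ȳ(t,·) : ℝ² → ℝ² is L-Lipschitz, that g : ℝ → [0,∞) is measurable with ∫₀ᵀ g(r)² dr < ∞ and |û(t,x)| ≤ g(t) for all t ∈ [0,T], x ∈ ℝ², and that X̄ and X̂ are flows of ȳ and of ȳ + û in integral form. Then for all 0 ≤ τ ≤ t ≤ T and all x ∈ ℝ²: |X̂(t,τ,x) − X̄(t,τ,x)| ≤ T^{1/2} · e^{LT} · (∫_τ^t g(r)² dr)^{1/2}. -/

import Mathlib

/-!
Along the two flows started at `x` at time `τ`, the gap `e s = ‖X̂ s - X̄ s‖` satisfies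
`e s ≤ ∫_τ^t g + L ∫_τ^s e` by the Lipschitz bound on `ȳ`, so Grönwall's inequality in integral
form gives `e t ≤ e^{L (t - τ)} ∫_τ^t g`, and Cauchy–Schwarz bounds `∫_τ^t g` by
`(t - τ)^{1/2} (∫_τ^t g²)^{1/2}`.
-/

open MeasureTheory Set Real

theorem le_mul_exp_of_le_add_mul_integral {φ : ℝ → ℝ} {a b C L : ℝ} (hL : 0 ≤ L)
    (hφ : ContinuousOn φ (Icc a b)) (h : ∀ s ∈ Icc a b, φ s ≤ C + L * ∫ r in a..s, φ r) :
    ∀ s ∈ Icc a b, φ s ≤ C * exp (L * (s - a)) := by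
  intro s hs
  have hab : a ≤ b := hs.1.trans hs.2
  -- Extending `φ` continuously to `ℝ` makes its primitive differentiable everywhere.
  set ψ : ℝ → ℝ := fun r => φ (projIcc a b hab r)
  have hψ : Continuous ψ :=
    hφ.comp_continuous (continuous_subtype_val.comp continuous_projIcc) fun r =>
      (projIcc a b hab r).2
  have hψφ : EqOn ψ φ (Icc a b) := fun r hr => by simp [ψ, projIcc_of_mem hab hr]
  have hint : ∀ s ∈ Icc a b, ∫ r in a..s, ψ r = ∫ r in a..s, φ r := fun s hs =>
    intervalIntegral.integral_congr fun r hr =>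
      hψφ (Icc_subset_Icc le_rfl hs.2 (by rwa [uIcc_of_le hs.1] at hr))
  set F : ℝ → ℝ := fun s => C + L * ∫ r in a..s, ψ r
  have hF : ∀ s, HasDerivAt F (L * ψ s) s := fun s =>
    ((hψ.integral_hasStrictDerivAt a s).hasDerivAt.const_mul L).const_add C
  have hFbound : ∀ s ∈ Icc a b, F s ≤ gronwallBound C L 0 (s - a) := by
    refine le_gronwallBound_of_liminf_deriv_right_le (f' := fun s => L * ψ s)
      (fun s _ => (hF s).continuousAt.continuousWithinAt)
      (fun s _ r hr => (hF s).hasDerivWithinAt.liminf_right_slope_le hr) (by simp [F])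
      fun s hs => ?_
    have hs' : s ∈ Icc a b := Ico_subset_Icc_self hs
    rw [add_zero, hψφ hs']
    exact mul_le_mul_of_nonneg_left (by simpa [F, hint s hs'] using h s hs') hL
  calc φ s ≤ F s := by simpa [F, hint s hs] using h s hs
    _ ≤ C * exp (L * (s - a)) := by simpa [gronwallBound_ε0] using hFbound s hs

theorem integral_norm_le_sqrt_measureReal_mul_sqrt_integral_sq {α E : Type*} [MeasurableSpace α]
    {μ : Measure α} [IsFiniteMeasure μ] [NormedAddCommGroup E] {g : α → E} (hg : MemLp g 2 μ) :
    ∫ x, ‖g x‖ ∂μ ≤ √(μ.real univ) * √(∫ x, ‖g x‖ ^ 2 ∂μ) := by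
  have h := integral_mul_norm_le_Lp_mul_Lq (f := fun _ => (1 : ℝ)) (g := fun x => ‖g x‖)
    Real.HolderConjugate.two_two (by simpa using memLp_const (μ := μ) (p := 2) (1 : ℝ))
    (by simpa using hg.norm)
  simp only [norm_one, one_rpow, integral_const, smul_eq_mul, mul_one, one_mul, norm_norm] at h
  rw [sqrt_eq_rpow, sqrt_eq_rpow]
  convert h using 3
  norm_num

theorem intervalIntegral.integral_norm_le_sqrt_mul_sqrt_integral_sq {g : ℝ → ℝ} {a b : ℝ}
    (hab : a ≤ b) (hg : AEStronglyMeasurable g (volume.restrict (Ioc a b)))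
    (hg2 : IntervalIntegrable (fun r => g r ^ 2) volume a b) :
    ∫ r in a..b, ‖g r‖ ≤ √(b - a) * √(∫ r in a..b, g r ^ 2) := by
  rw [intervalIntegral.integral_of_le hab, intervalIntegral.integral_of_le hab]
  simpa [volume_real_Ioc_of_le hab] using integral_norm_le_sqrt_measureReal_mul_sqrt_integral_sq
    ((memLp_two_iff_integrable_sq hg).2 hg2.1)

theorem norm_sub_le_integral_mul_exp_of_integral_eq {E : Type*} [NormedAddCommGroup E]
    [NormedSpace ℝ E] {f u : ℝ → E → E} {X Y : ℝ → E} {g : ℝ → ℝ} {a b L : ℝ} {x : E}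
    (hab : a ≤ b) (hL : 0 ≤ L) (hf : ∀ r ∈ Icc a b, ∀ y y', ‖f r y - f r y'‖ ≤ L * ‖y - y'‖)
    (hu : ∀ r ∈ Icc a b, ∀ y, ‖u r y‖ ≤ g r) (hg : IntervalIntegrable g volume a b)
    (hX_cont : ContinuousOn X (Icc a b)) (hY_cont : ContinuousOn Y (Icc a b))
    (hX_int : ∀ s ∈ Icc a b, IntervalIntegrable (fun r => f r (X r) + u r (X r)) volume a s)
    (hY_int : ∀ s ∈ Icc a b, IntervalIntegrable (fun r => f r (Y r)) volume a s)
    (hX : ∀ s ∈ Icc a b, X s = x + ∫ r in a..s, (f r (X r) + u r (X r)))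
    (hY : ∀ s ∈ Icc a b, Y s = x + ∫ r in a..s, f r (Y r)) :
    ‖X b - Y b‖ ≤ (∫ r in a..b, g r) * exp (L * (b - a)) := by
  have hdist : ContinuousOn (fun s => ‖X s - Y s‖) (Icc a b) := (hX_cont.sub hY_cont).norm
  refine le_mul_exp_of_le_add_mul_integral hL hdist (fun s hs => ?_) b ⟨hab, le_rfl⟩
  have hsub : Icc a s ⊆ Icc a b := Icc_subset_Icc le_rfl hs.2
  have hdist_int : IntervalIntegrable (fun r => ‖X r - Y r‖) volume a s :=
    (hdist.mono hsub).intervalIntegrable_of_Icc hs.1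
  have hg_on : ∀ c ∈ Icc a b, ∀ d ∈ Icc a b, IntervalIntegrable g volume c d := fun c hc d hd =>
    hg.mono_set (uIcc_subset_uIcc (by rwa [uIcc_of_le hab]) (by rwa [uIcc_of_le hab]))
  have hg_int : IntervalIntegrable g volume a s := hg_on a ⟨le_rfl, hab⟩ s hs
  have hpointwise : ∀ r ∈ Icc a s,
      ‖f r (X r) + u r (X r) - f r (Y r)‖ ≤ L * ‖X r - Y r‖ + g r := fun r hr => by
    rw [add_sub_right_comm]
    exact (norm_add_le _ _).trans (add_le_add (hf r (hsub hr) _ _) (hu r (hsub hr) _))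
  have hg_mono : ∫ r in a..s, g r ≤ ∫ r in a..b, g r := by
    rw [← intervalIntegral.integral_add_adjacent_intervals hg_int
      (hg_on s hs b ⟨hab, le_rfl⟩)]
    have hg_nonneg : 0 ≤ ∫ r in s..b, g r := intervalIntegral.integral_nonneg hs.2
      fun r hr => (norm_nonneg _).trans (hu r ⟨hs.1.trans hr.1, hr.2⟩ x)
    linarith
  calc ‖X s - Y s‖
      = ‖∫ r in a..s, (f r (X r) + u r (X r) - f r (Y r))‖ := by
        rw [hX s hs, hY s hs, intervalIntegral.integral_sub (hX_int s hs) (hY_int s hs),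
          add_sub_add_left_eq_sub]
    _ ≤ ∫ r in a..s, (L * ‖X r - Y r‖ + g r) :=
        intervalIntegral.norm_integral_le_of_norm_le hs.1
          (Filter.Eventually.of_forall fun r hr => hpointwise r (Ioc_subset_Icc_self hr))
          ((hdist_int.const_mul L).add hg_int)
    _ = L * (∫ r in a..s, ‖X r - Y r‖) + ∫ r in a..s, g r := by
        rw [intervalIntegral.integral_add (hdist_int.const_mul L) hg_int,
          intervalIntegral.integral_const_mul]
    _ ≤ (∫ r in a..b, g r) + L * ∫ r in a..s, ‖X r - Y r‖ := by linarith

theorem stmt_2_general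
    (T L : ℝ) (hL : 0 ≤ L)
    (ybar uhat : ℝ → EuclideanSpace ℝ (Fin 2) → EuclideanSpace ℝ (Fin 2))
    (Xbar Xhat : ℝ → ℝ → EuclideanSpace ℝ (Fin 2) → EuclideanSpace ℝ (Fin 2))
    (hlip : ∀ t ∈ Set.Icc (0:ℝ) T, ∀ x x', ‖ybar t x - ybar t x'‖ ≤ L * ‖x - x'‖)
    (g : ℝ → ℝ) (hg_meas : Measurable g)
    (hg_int : IntervalIntegrable (fun t => (g t)^2) volume 0 T)
    (hu_bound : ∀ t ∈ Set.Icc (0:ℝ) T, ∀ x, ‖uhat t x‖ ≤ g t)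
    (hXbar_cont : ∀ τ ∈ Set.Icc (0:ℝ) T, ∀ x, ContinuousOn (fun r => Xbar r τ x) (Set.Icc 0 T))
    (hXhat_cont : ∀ τ ∈ Set.Icc (0:ℝ) T, ∀ x, ContinuousOn (fun r => Xhat r τ x) (Set.Icc 0 T))
    (hXbar_intble : ∀ τ t : ℝ, 0 ≤ τ → τ ≤ t → t ≤ T → ∀ x,
      IntervalIntegrable (fun r => ybar r (Xbar r τ x)) volume τ t)
    (hXhat_intble : ∀ τ t : ℝ, 0 ≤ τ → τ ≤ t → t ≤ T → ∀ x,
      IntervalIntegrable (fun r => ybar r (Xhat r τ x) + uhat r (Xhat r τ x)) volume τ t)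
    (hXbar_eq : ∀ τ t : ℝ, 0 ≤ τ → τ ≤ t → t ≤ T → ∀ x,
      Xbar t τ x = x + ∫ r in τ..t, ybar r (Xbar r τ x))
    (hXhat_eq : ∀ τ t : ℝ, 0 ≤ τ → τ ≤ t → t ≤ T → ∀ x,
      Xhat t τ x = x + ∫ r in τ..t, (ybar r (Xhat r τ x) + uhat r (Xhat r τ x))) :
    ∀ τ t : ℝ, 0 ≤ τ → τ ≤ t → t ≤ T → ∀ x,
      ‖Xhat t τ x - Xbar t τ x‖ ≤
        Real.sqrt T * Real.exp (L * T) * Real.sqrt (∫ r in τ..t, (g r)^2) := by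
  intro τ t hτ0 hτt htT x
  have hτ : τ ∈ Icc 0 T := ⟨hτ0, hτt.trans htT⟩
  have hsub : Icc τ t ⊆ Icc 0 T := Icc_subset_Icc hτ0 htT
  have hT : uIcc 0 T = Icc 0 T := uIcc_of_le (hτ0.trans (hτt.trans htT))
  have hg2 : IntervalIntegrable (fun r => g r ^ 2) volume τ t :=
    hg_int.mono_set (uIcc_subset_uIcc (hT ▸ hτ) (hT ▸ hsub ⟨hτt, le_rfl⟩))
  have hg : IntervalIntegrable g volume τ t :=
    (intervalIntegrable_iff_integrableOn_Ioc_of_le hτt).2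
      (((memLp_two_iff_integrable_sq hg_meas.aestronglyMeasurable).2 hg2.1).integrable one_le_two)
  have hcomparison := norm_sub_le_integral_mul_exp_of_integral_eq hτt hL
    (fun r hr => hlip r (hsub hr)) (fun r hr => hu_bound r (hsub hr)) hg
    ((hXhat_cont τ hτ x).mono hsub) ((hXbar_cont τ hτ x).mono hsub)
    (fun s hs => hXhat_intble τ s hτ0 hs.1 (hs.2.trans htT) x)
    (fun s hs => hXbar_intble τ s hτ0 hs.1 (hs.2.trans htT) x)
    (fun s hs => hXhat_eq τ s hτ0 hs.1 (hs.2.trans htT) x)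
    (fun s hs => hXbar_eq τ s hτ0 hs.1 (hs.2.trans htT) x)
  have hcauchySchwarz : ∫ r in τ..t, g r ≤ √(t - τ) * √(∫ r in τ..t, g r ^ 2) :=
    (Real.le_norm_self _).trans <| (intervalIntegral.norm_integral_le_integral_norm hτt).trans <|
      intervalIntegral.integral_norm_le_sqrt_mul_sqrt_integral_sq hτt
        hg_meas.aestronglyMeasurable hg2
  calc ‖Xhat t τ x - Xbar t τ x‖
      ≤ (∫ r in τ..t, g r) * exp (L * (t - τ)) := hcomparison
    _ ≤ (√(t - τ) * √(∫ r in τ..t, g r ^ 2)) * exp (L * T) :=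
        mul_le_mul hcauchySchwarz (exp_le_exp.2 (by nlinarith)) (exp_pos _).le (by positivity)
    _ ≤ √T * exp (L * T) * √(∫ r in τ..t, g r ^ 2) := by
        rw [mul_right_comm]
        gcongr
        linarith

/-- The Grönwall comparison estimate (3.5) of the paper: the flows of `ybar` and of
`ybar + uhat` differ by at most `√T e^{LT} (∫_τ^t g²)^{1/2}` when `‖uhat(r,·)‖_{L∞} ≤ g(r)`. -/
theorem stmt_2
    (T L : ℝ) (hT : 0 < T) (hL : 0 ≤ L)
    (ybar uhat : ℝ → EuclideanSpace ℝ (Fin 2) → EuclideanSpace ℝ (Fin 2))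
    (Xbar Xhat : ℝ → ℝ → EuclideanSpace ℝ (Fin 2) → EuclideanSpace ℝ (Fin 2))
    (hlip : ∀ t ∈ Set.Icc (0:ℝ) T, ∀ x x', ‖ybar t x - ybar t x'‖ ≤ L * ‖x - x'‖)
    (g : ℝ → ℝ) (hg_meas : Measurable g) (hg_nonneg : ∀ t, 0 ≤ g t)
    (hg_int : IntervalIntegrable (fun t => (g t)^2) volume 0 T)
    (hu_bound : ∀ t ∈ Set.Icc (0:ℝ) T, ∀ x, ‖uhat t x‖ ≤ g t)
    (hXbar_cont : ∀ τ ∈ Set.Icc (0:ℝ) T, ∀ x, ContinuousOn (fun r => Xbar r τ x) (Set.Icc 0 T))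
    (hXhat_cont : ∀ τ ∈ Set.Icc (0:ℝ) T, ∀ x, ContinuousOn (fun r => Xhat r τ x) (Set.Icc 0 T))
    (hXbar_intble : ∀ τ t : ℝ, 0 ≤ τ → τ ≤ t → t ≤ T → ∀ x,
      IntervalIntegrable (fun r => ybar r (Xbar r τ x)) volume τ t)
    (hXhat_intble : ∀ τ t : ℝ, 0 ≤ τ → τ ≤ t → t ≤ T → ∀ x,
      IntervalIntegrable (fun r => ybar r (Xhat r τ x) + uhat r (Xhat r τ x)) volume τ t)
    (hXbar_eq : ∀ τ t : ℝ, 0 ≤ τ → τ ≤ t → t ≤ T → ∀ x,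
      Xbar t τ x = x + ∫ r in τ..t, ybar r (Xbar r τ x))
    (hXhat_eq : ∀ τ t : ℝ, 0 ≤ τ → τ ≤ t → t ≤ T → ∀ x,
      Xhat t τ x = x + ∫ r in τ..t, (ybar r (Xhat r τ x) + uhat r (Xhat r τ x))) :
    ∀ τ t : ℝ, 0 ≤ τ → τ ≤ t → t ≤ T → ∀ x,
      ‖Xhat t τ x - Xbar t τ x‖ ≤
        Real.sqrt T * Real.exp (L * T) * Real.sqrt (∫ r in τ..t, (g r)^2) :=
  stmt_2_general T L hL ybar uhat Xbar Xhat hlip g hg_meas hg_int hu_bound hXbar_cont hXhat_cont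
    hXbar_intble hXhat_intble hXbar_eq hXhat_eq
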